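/- If there exists an index q ≠ 1 with p_q > p_1, then the probability that answer a_1's count is at least answer a_q's count among N i.i.d. samples, Pr(X_1(ω) ≥ X_q(ω)), tends to 0 as N → ∞. -/

import Mathlib

/-!
Tilt the sample distribution: weight answer `a₁` by `t` and `a_q` by `t⁻¹`. On the event
`X₁ ≥ X_q` the total weight `t ^ X₁ * t⁻¹ ^ X_q` is at least `1` once `t ≥ 1`, so by Markov's
inequality the event has probability at most `r ^ N`, where
`r = ∑ j, p j * w j = 1 + p₁ (t - 1) + p_q (t⁻¹ - 1)`. Since `p₁ < p_q`, some `t > 1` makes `r < 1`.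
-/

open Finset Filter

/-- Number of the `N` samples in `ω` equal to answer `j`. -/
def count {m N : ℕ} (ω : Fin N → Fin m) (j : Fin m) : ℕ :=
  (Finset.univ.filter fun i => ω i = j).card

/-- The set `J(ω)` of answers achieving the maximal count among the samples `ω`. -/
def maxSet {m N : ℕ} (ω : Fin N → Fin m) : Finset (Fin m) :=
  Finset.univ.filter fun j => ∀ k, count ω k ≤ count ω j

/-- Majority-vote probability that answer `l` is returned after `N` i.i.d. samples
drawn from `p`: the most frequent answer is chosen, ties broken uniformly. -/
noncomputable def majorityProb {m : ℕ} (p : Fin m → ℝ) (N : ℕ) (l : Fin m) : ℝ :=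
  ∑ ω : Fin N → Fin m, (∏ i, p (ω i)) *
    (if l ∈ maxSet ω then (1 : ℝ) / ((maxSet ω).card : ℝ) else 0)

/-- Markov's inequality for the weight `∏ i, w (ω i)`, whose expectation is
`(∑ a, p a * w a) ^ N`. -/
theorem sum_ite_prod_le_pow_of_one_le_prod {α : Type*} [Fintype α] {N : ℕ} {p w : α → ℝ}
    (hp : ∀ a, 0 ≤ p a) (hw : ∀ a, 0 ≤ w a) (E : (Fin N → α) → Prop) [DecidablePred E]
    (hE : ∀ ω, E ω → 1 ≤ ∏ i, w (ω i)) :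
    ∑ ω : Fin N → α, (if E ω then ∏ i, p (ω i) else 0) ≤ (∑ a, p a * w a) ^ N := by
  rw [Fintype.sum_pow]
  refine sum_le_sum fun ω _ => ?_
  split_ifs with h
  · rw [prod_mul_distrib]
    exact le_mul_of_one_le_right (prod_nonneg fun i _ => hp _) (hE ω h)
  · exact prod_nonneg fun i _ => mul_nonneg (hp _) (hw _)

theorem exists_one_lt_mul_add_mul_inv_lt {a b : ℝ} (ha : 0 ≤ a) (hab : a < b) :
    ∃ t : ℝ, 1 < t ∧ a * t + b * t⁻¹ < a + b := by
  have hb : 0 < b := ha.trans_lt hab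
  -- `t = 2b / (a + b)` gives `a + b - (a t + b / t) = (b - a)² / (2 (a + b))`.
  refine ⟨2 * b / (a + b), by rw [one_lt_div (by positivity)]; linarith, ?_⟩
  rw [inv_div, ← mul_div_assoc, ← mul_div_assoc, div_add_div _ _ (by positivity) (by positivity),
    div_lt_iff₀ (by positivity)]
  nlinarith [mul_pos hb (mul_pos (sub_pos.mpr hab) (sub_pos.mpr hab))]

theorem prod_apply_eq_prod_pow_count {M : Type*} [CommMonoid M] {m N : ℕ} (w : Fin m → M)
    (ω : Fin N → Fin m) : ∏ i, w (ω i) = ∏ j, w j ^ count ω j := by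
  simp only [count, ← prod_const]
  exact (prod_fiberwise' _ ω w).symm

section Tilt

variable {α : Type*} [DecidableEq α] (j k : α) (t : ℝ)

noncomputable def tilt (x : α) : ℝ :=
  if x = j then t else if x = k then t⁻¹ else 1

variable {j k t}

theorem tilt_nonneg (ht : 0 ≤ t) (x : α) : 0 ≤ tilt j k t x := by
  unfold tilt
  split_ifs <;> positivity

theorem sum_mul_tilt [Fintype α] (hjk : j ≠ k) (p : α → ℝ) :
    ∑ x, p x * tilt j k t x = ∑ x, p x + (p j * (t - 1) + p k * (t⁻¹ - 1)) := by
  rw [← sub_eq_iff_eq_add', ← sum_sub_distrib,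
    Fintype.sum_eq_add j k hjk fun x hx => by simp [tilt, hx.1, hx.2]]
  simp [tilt, hjk.symm, mul_sub]

theorem prod_tilt_apply {m N : ℕ} {j k : Fin m} (hjk : j ≠ k) (ω : Fin N → Fin m) :
    ∏ i, tilt j k t (ω i) = t ^ count ω j * t⁻¹ ^ count ω k := by
  rw [prod_apply_eq_prod_pow_count,
    Fintype.prod_eq_mul j k hjk fun x hx => by simp [tilt, hx.1, hx.2]]
  simp [tilt, hjk.symm]

theorem one_le_prod_tilt_apply {m N : ℕ} {j k : Fin m} (hjk : j ≠ k) (ht : 1 ≤ t)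
    {ω : Fin N → Fin m} (hω : count ω k ≤ count ω j) : 1 ≤ ∏ i, tilt j k t (ω i) := by
  rw [prod_tilt_apply hjk, inv_pow, ← div_eq_mul_inv, one_le_div (by positivity)]
  exact pow_le_pow_right₀ ht hω

end Tilt

/-- If some wrong answer `a_q` is strictly more likely than `a₁`, the
probability that `a₁`'s count is at least `a_q`'s count tends to `0` as `N → ∞`. -/
theorem count_ge_tendsto_zero {m : ℕ} (hm : 0 < m) (p : Fin m → ℝ)
    (hnn : ∀ j, 0 ≤ p j) (hsum : ∑ j, p j = 1)
    (q : Fin m) (hq : q ≠ (⟨0, hm⟩ : Fin m)) (hpq : p ⟨0, hm⟩ < p q) :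
    Tendsto
      (fun N => ∑ ω : Fin N → Fin m,
        if count ω q ≤ count ω ⟨0, hm⟩ then ∏ i, p (ω i) else 0)
      atTop (nhds 0) := by
  obtain ⟨t, ht, hlt⟩ := exists_one_lt_mul_add_mul_inv_lt (hnn _) hpq
  have htilt_nonneg := tilt_nonneg (j := (⟨0, hm⟩ : Fin m)) (k := q) (zero_le_one.trans ht.le)
  have hr0 : 0 ≤ ∑ j, p j * tilt ⟨0, hm⟩ q t j :=
    sum_nonneg fun j _ => mul_nonneg (hnn j) (htilt_nonneg j)
  have hr1 : ∑ j, p j * tilt ⟨0, hm⟩ q t j < 1 := by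
    rw [sum_mul_tilt hq.symm, hsum]; linarith
  refine squeeze_zero (fun N => sum_nonneg fun ω _ => ite_nonneg (prod_nonneg fun i _ => hnn _)
    le_rfl) (fun N => ?_) (tendsto_pow_atTop_nhds_zero_of_lt_one hr0 hr1)
  exact sum_ite_prod_le_pow_of_one_le_prod hnn htilt_nonneg _ fun ω =>
    one_le_prod_tilt_apply hq.symm ht.le
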